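/- Let G be a graph and let T ⊆ Ê(G) be a discrete subspace of Ê(G). In the line graph G′ of G, let T′ = Φ(T ∩ Ω_E(G)) ∪ ⋃_{v ∈ T ∩ V(G)} K_v, where K_v = δ({v}) ⊆ E(G) = V(G′) is the set of edges of G incident with v, viewed as vertices of G′, and Φ([r]_E) = [φ(r)]. Then T′ is a discrete subspace of V̂(G′). -/

import Mathlib

/-!
Formalization of definitions and a statement from
"Edge-connectivity and edge-ends in infinite graphs" (arXiv:2404.17106).
-/

universe u

namespace EdgeEndPaper

variable {V : Type u}

/-- A ray in `G`: a one-way infinite path `v₀v₁v₂…`. -/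
structure Ray (G : SimpleGraph V) : Type u where
  f : ℕ → V
  inj : Function.Injective f
  adj : ∀ n : ℕ, G.Adj (f n) (f (n + 1))

/-- A double ray in `G`: a two-way infinite path. -/
structure DoubleRay (G : SimpleGraph V) : Type u where
  f : ℤ → V
  inj : Function.Injective f
  adj : ∀ n : ℤ, G.Adj (f n) (f (n + 1))

variable (G : SimpleGraph V)

/-- The tails of the rays `r` and `s` lie in the same connected component of `G - F`
(deletion of the edges in `F`). -/
def SameComp (F : Set (Sym2 V)) (r s : Ray G) : Prop :=
  ∃ N : ℕ, ∀ m n : ℕ, N ≤ m → N ≤ n → (G.deleteEdges F).Reachable (r.f m) (s.f n)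

/-- Edge-equivalence of rays: no finite edge set separates the tails of `r` and `s`. -/
def EdgeEquiv (r s : Ray G) : Prop :=
  ∀ F : Set (Sym2 V), F.Finite → SameComp G F r s

/-- The edge-end space `Ω_E(G)`. -/
def EdgeEnd : Type u := Quot (EdgeEquiv G)

/-- The edge-end `[r]_E` of a ray `r`. -/
def Ray.edgeEnd {G : SimpleGraph V} (r : Ray G) : EdgeEnd G := Quot.mk _ r

/-- `C_E(F, ω)` : the vertices of the connected component of `G - F` in which `ω` has a tail. -/
def CE (F : Set (Sym2 V)) (ω : EdgeEnd G) : Set V :=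
  {v | ∃ r : Ray G, r.edgeEnd = ω ∧ ∃ N : ℕ, ∀ n : ℕ, N ≤ n →
    (G.deleteEdges F).Reachable (r.f n) v}

/-- `Ω_E(F, ω)` : the edge-ends whose rays have tails in the same component of `G - F`
as the rays of `ω`. -/
def OmegaE (F : Set (Sym2 V)) (ω : EdgeEnd G) : Set (EdgeEnd G) :=
  {η | ∃ r s : Ray G, r.edgeEnd = ω ∧ s.edgeEnd = η ∧ SameComp G F r s}

/-- The topology on `Ω_E(G)`, with the sets `Ω_E(F, ω)` (for finite `F ⊆ E(G)`) as a basis. -/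
def edgeEndTopology : TopologicalSpace (EdgeEnd G) :=
  .generateFrom {U | ∃ (F : Set (Sym2 V)) (ω : EdgeEnd G),
    F.Finite ∧ F ⊆ G.edgeSet ∧ U = OmegaE G F ω}

/-- `Ê(F, ω) = C_E(F, ω) ∪ Ω_E(F, ω)`, inside `Ê(G) = V(G) ⊔ Ω_E(G)`. -/
def EHatBasic (F : Set (Sym2 V)) (ω : EdgeEnd G) : Set (V ⊕ EdgeEnd G) :=
  Sum.inl '' CE G F ω ∪ Sum.inr '' OmegaE G F ω

/-- The topology on `Ê(G) = V(G) ∪ Ω_E(G)`: the vertex singletons together with the sets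
`Ê(F, ω)` (for finite `F ⊆ E(G)`) form a basis. -/
def eHatTopology : TopologicalSpace (V ⊕ EdgeEnd G) :=
  .generateFrom ({U | ∃ v : V, U = {Sum.inl v}} ∪
    {U | ∃ (F : Set (Sym2 V)) (ω : EdgeEnd G),
      F.Finite ∧ F ⊆ G.edgeSet ∧ U = EHatBasic G F ω})

/-- A vertex `v` edge-dominates the edge-end `ω` if `v ∈ C_E(F, ω)` for every finite `F`. -/
def EdgeDominates (v : V) (ω : EdgeEnd G) : Prop :=
  ∀ F : Set (Sym2 V), F.Finite → v ∈ CE G F ω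

/-- The cut `δ(X)`: the edges of `G` with one endpoint in `X` and the other outside of `X`. -/
def cut (X : Set V) : Set (Sym2 V) :=
  {e | e ∈ G.edgeSet ∧ ∃ u v : V, e = s(u, v) ∧ u ∈ X ∧ v ∉ X}

/-- `u` and `v` are connected in `G` by a walk avoiding the vertex set `S`. -/
def ReachAvoid (S : Set V) (u v : V) : Prop :=
  ∃ p : G.Walk u v, ∀ w ∈ p.support, w ∉ S

/-- The tails of `r` and `s` lie in the same component of `G - S` (vertex deletion). -/
def VSameComp (S : Set V) (r s : Ray G) : Prop :=
  ∃ N : ℕ, ∀ m n : ℕ, N ≤ m → N ≤ n → ReachAvoid G S (r.f m) (s.f n)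

/-- Equivalence of rays: no finite vertex set separates the tails of `r` and `s`. -/
def VEquiv (r s : Ray G) : Prop :=
  ∀ S : Set V, S.Finite → VSameComp G S r s

/-- The end space `Ω(G)`. -/
def VEnd : Type u := Quot (VEquiv G)

/-- The end `[r]` of a ray `r`. -/
def Ray.vEnd {G : SimpleGraph V} (r : Ray G) : VEnd G := Quot.mk _ r

/-- `C(S, ω)` : the vertices of the component of `G - S` in which `ω` has a tail. -/
def CV (S : Set V) (ω : VEnd G) : Set V :=
  {v | ∃ r : Ray G, r.vEnd = ω ∧ ∃ N : ℕ, ∀ n : ℕ, N ≤ n → ReachAvoid G S (r.f n) v}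

/-- `Ω(S, ω)` : the ends whose rays have tails in the same component of `G - S` as `ω`. -/
def OmegaV (S : Set V) (ω : VEnd G) : Set (VEnd G) :=
  {η | ∃ r s : Ray G, r.vEnd = ω ∧ s.vEnd = η ∧ VSameComp G S r s}

/-- `V̂(S, ω) = C(S, ω) ∪ Ω(S, ω)`. -/
def VHatBasic (S : Set V) (ω : VEnd G) : Set (V ⊕ VEnd G) :=
  Sum.inl '' CV G S ω ∪ Sum.inr '' OmegaV G S ω

/-- The topology on `V̂(G) = V(G) ∪ Ω(G)`: the finite vertex sets and the sets `V̂(S, ω)`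
form a basis of open sets. -/
def vHatTopology : TopologicalSpace (V ⊕ VEnd G) :=
  .generateFrom ({U | ∃ A : Set V, A.Finite ∧ U = Sum.inl '' A} ∪
    {U | ∃ (S : Set V) (ω : VEnd G), S.Finite ∧ U = VHatBasic G S ω})

/-- The topology on the end space `Ω(G)`, with the sets `Ω(S, ω)` as a basis. -/
def endTopology : TopologicalSpace (VEnd G) :=
  .generateFrom {U | ∃ (S : Set V) (ω : VEnd G), S.Finite ∧ U = OmegaV G S ω}

/-- `C` is (the vertex set of) a connected component of the graph obtained from `G` by
deleting the vertex set `S`. -/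
def CompAvoiding (S : Set V) (C : Set V) : Prop :=
  ∃ v : V, v ∉ S ∧ C = {u | ReachAvoid G S v u}

/-- The ray `φ(r)` in the line graph of `G` induced by a ray `r` of `G`: its vertices are
the consecutive edges of `r`. -/
def phiRay {G : SimpleGraph V} (r : Ray G) : Ray G.lineGraph where
  f n := ⟨s(r.f n, r.f (n + 1)), G.mem_edgeSet.mpr (r.adj n)⟩
  inj a b h := by
    have h' : s(r.f a, r.f (a + 1)) = s(r.f b, r.f (b + 1)) := congrArg Subtype.val h
    rcases Sym2.eq_iff.mp h' with ⟨h1, _⟩ | ⟨h1, h2⟩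
    · exact r.inj h1
    · have e1 := r.inj h1
      have e2 := r.inj h2
      omega
  adj n := by
    refine SimpleGraph.lineGraph_adj_iff_exists.mpr ⟨?_, r.f (n + 1), ?_, ?_⟩
    · intro h
      have h' : s(r.f n, r.f (n + 1)) = s(r.f (n + 1), r.f (n + 2)) :=
        congrArg Subtype.val h
      rcases Sym2.eq_iff.mp h' with ⟨h1, _⟩ | ⟨h1, _⟩
      · have := r.inj h1; omega
      · have := r.inj h1; omega
    · exact Sym2.mem_iff.mpr (Or.inr rfl)
    · exact Sym2.mem_iff.mpr (Or.inl rfl)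

/-- The subset `T' ⊆ V̂(G')` induced by a subset `T ⊆ Ê(G)`:
`T' = Φ(T ∩ Ω_E(G)) ∪ ⋃_{v ∈ T ∩ V(G)} K_v`, where `K_v = δ({v})`. -/
def lineImage (Φ : EdgeEnd G → VEnd G.lineGraph) (T : Set (V ⊕ EdgeEnd G)) :
    Set (↥G.edgeSet ⊕ VEnd G.lineGraph) :=
  {x | (∃ ω : EdgeEnd G, Sum.inr ω ∈ T ∧ x = Sum.inr (Φ ω)) ∨
       (∃ (v : V) (e : G.edgeSet), Sum.inl v ∈ T ∧ v ∈ (e : Sym2 V) ∧ x = Sum.inl e)}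

/-! Every edge `e` is isolated in `V̂(G')`, finite vertex sets being open. For `ω ∈ T`, choose
a basic neighbourhood `Ê(F, ω)` that meets `T` only in `ω`, and read the finite edge set `F`
as a finite vertex set of `G'`. A walk in `G'` avoiding `F` passes through edges of `G` outside
`F`, so it yields connections in `G - F` between the endpoints of its first and last edge.
Hence every end `Φ η` in `V̂(F, Φ ω)` has `η ∈ Ω_E(F, ω)`, and every edge in `V̂(F, Φ ω)` has
its endpoints in `C_E(F, ω)`; by the choice of `F`, the only point of `T'` left in
`V̂(F, Φ ω)` is `Φ ω`. -/

open Topology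

section

variable {α β : Type*}

def TailsRel (R : α → α → Prop) (f g : ℕ → α) : Prop :=
  ∃ N : ℕ, ∀ m n : ℕ, N ≤ m → N ≤ n → R (f m) (g n)

variable {R : α → α → Prop} {f g h : ℕ → α}

lemma TailsRel.symm [Std.Symm R] (hfg : TailsRel R f g) : TailsRel R g f := by
  obtain ⟨N, hN⟩ := hfg
  exact ⟨N, fun m n hm hn => Std.Symm.symm _ _ (hN n m hn hm)⟩

lemma TailsRel.trans [IsTrans α R] (hfg : TailsRel R f g) (hgh : TailsRel R g h) :
    TailsRel R f h := by
  obtain ⟨N₁, hN₁⟩ := hfg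
  obtain ⟨N₂, hN₂⟩ := hgh
  exact ⟨max N₁ N₂, fun m n hm hn =>
    _root_.trans (hN₁ m (max N₁ N₂) (by omega) (by omega))
      (hN₂ _ n (by omega) (by omega))⟩

lemma TailsRel.trans_eventually [IsTrans α R] (hfg : TailsRel R f g) {a : α}
    (hg : ∃ N, ∀ n, N ≤ n → R (g n) a) : ∃ N, ∀ n, N ≤ n → R (f n) a := by
  obtain ⟨N₁, hN₁⟩ := hfg
  obtain ⟨N₂, hN₂⟩ := hg
  exact ⟨max N₁ N₂, fun n hn =>
    _root_.trans (hN₁ n (max N₁ N₂) (by omega) (by omega)) (hN₂ _ (by omega))⟩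

lemma TailsRel.mono {R' : α → α → Prop} (hR : ∀ a b, R a b → R' a b)
    (hfg : TailsRel R f g) : TailsRel R' f g := by
  obtain ⟨N, hN⟩ := hfg
  exact ⟨N, fun m n hm hn => hR _ _ (hN m n hm hn)⟩

lemma tailsRel_self_of_forall_rel_succ [IsTrans α R] [Std.Symm R] {N : ℕ}
    (hf : ∀ k, N ≤ k → R (f k) (f (k + 1))) : TailsRel R f f := by
  have forward : ∀ m n, N ≤ m → m < n → R (f m) (f n) := fun m n hm hmn =>
    Nat.rel_of_forall_rel_succ_of_le_of_lt R hf hm hmn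
  refine ⟨N, fun m n hm hn => ?_⟩
  rcases lt_trichotomy m n with hmn | rfl | hnm
  · exact forward m n hm hmn
  · exact _root_.trans (hf m hm) (Std.Symm.symm _ _ (hf m hm))
  · exact Std.Symm.symm _ _ (forward n m hn hnm)

lemma exists_forall_ge_notMem_of_injective {f : ℕ → β} (hf : f.Injective) {S : Set β}
    (hS : S.Finite) : ∃ N, ∀ k, N ≤ k → f k ∉ S :=
  Filter.eventually_atTop.mp
    (Nat.cofinite_eq_atTop ▸ hf.tendsto_cofinite.eventually hS.eventually_cofinite_notMem)

lemma _root_.Set.Finite.preimage_val {s F : Set β} (hF : F.Finite) :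
    (Subtype.val ⁻¹' F : Set s).Finite :=
  hF.preimage Subtype.val_injective.injOn

end

section Rays

variable {G} {H : SimpleGraph V}

instance : IsTrans V H.Reachable := ⟨fun _ _ _ => SimpleGraph.Reachable.trans⟩

instance : Std.Symm H.Reachable := ⟨fun _ _ => SimpleGraph.Reachable.symm⟩

instance (S : Set V) : IsTrans V (ReachAvoid H S) where
  trans _ _ _ := fun ⟨p, hp⟩ ⟨q, hq⟩ => ⟨p.append q, fun w hw =>
    ((SimpleGraph.Walk.mem_support_append_iff p q).mp hw).elim (hp w) (hq w)⟩

instance (S : Set V) : Std.Symm (ReachAvoid H S) where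
  symm _ _ := fun ⟨p, hp⟩ => ⟨p.reverse, fun w hw => hp w (by simpa using hw)⟩

lemma sameComp_self {F : Set (Sym2 V)} (hF : F.Finite) (r : Ray G) : SameComp G F r r := by
  obtain ⟨N, hN⟩ :=
    exists_forall_ge_notMem_of_injective (Subtype.val_injective.comp (phiRay r).inj) hF
  exact tailsRel_self_of_forall_rel_succ (N := N) fun k hk =>
    (SimpleGraph.deleteEdges_adj.mpr ⟨r.adj k, hN k hk⟩).reachable

lemma vSameComp_self {S : Set V} (hS : S.Finite) (ρ : Ray H) : VSameComp H S ρ ρ := by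
  obtain ⟨N, hN⟩ := exists_forall_ge_notMem_of_injective ρ.inj hS
  refine tailsRel_self_of_forall_rel_succ (N := N) fun k hk => ⟨(ρ.adj k).toWalk, ?_⟩
  simp only [SimpleGraph.Adj.toWalk, SimpleGraph.Walk.support_cons,
    SimpleGraph.Walk.support_nil, List.mem_cons, List.not_mem_nil, or_false]
  rintro w (rfl | rfl) <;> exact hN _ (by omega)

lemma edgeEquiv_equivalence : Equivalence (EdgeEquiv G) where
  refl r _ hF := sameComp_self hF r
  symm h F hF := TailsRel.symm (h F hF)
  trans h₁ h₂ F hF := TailsRel.trans (h₁ F hF) (h₂ F hF)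

lemma vEquiv_equivalence : Equivalence (VEquiv H) where
  refl ρ _ hS := vSameComp_self hS ρ
  symm h S hS := TailsRel.symm (h S hS)
  trans h₁ h₂ S hS := TailsRel.trans (h₁ S hS) (h₂ S hS)

lemma Ray.edgeEquiv_of_edgeEnd_eq {r s : Ray G} (h : r.edgeEnd = s.edgeEnd) :
    EdgeEquiv G r s :=
  edgeEquiv_equivalence.eqvGen_iff.mp (Quot.eq.mp h)

lemma Ray.vEquiv_of_vEnd_eq {ρ σ : Ray H} (h : ρ.vEnd = σ.vEnd) : VEquiv H ρ σ :=
  vEquiv_equivalence.eqvGen_iff.mp (Quot.eq.mp h)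

lemma EdgeEnd.exists_rep (ω : EdgeEnd G) : ∃ r : Ray G, r.edgeEnd = ω :=
  Quot.exists_rep ω

end Rays

section EdgeEndTopology

variable {G} {F F' : Set (Sym2 V)}

lemma cE_anti (hFF' : F ⊆ F') (ω : EdgeEnd G) : CE G F' ω ⊆ CE G F ω :=
  fun _ ⟨r, hr, N, hN⟩ =>
    ⟨r, hr, N, fun n hn => (hN n hn).mono (SimpleGraph.deleteEdges_anti hFF')⟩

lemma omegaE_anti (hFF' : F ⊆ F') (ω : EdgeEnd G) : OmegaE G F' ω ⊆ OmegaE G F ω :=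
  fun _ ⟨r, s, hr, hs, hrs⟩ =>
    ⟨r, s, hr, hs, TailsRel.mono (fun _ _ h => h.mono (SimpleGraph.deleteEdges_anti hFF')) hrs⟩

lemma eHatBasic_anti (hFF' : F ⊆ F') (ω : EdgeEnd G) : EHatBasic G F' ω ⊆ EHatBasic G F ω :=
  Set.union_subset_union (Set.image_mono (cE_anti hFF' ω)) (Set.image_mono (omegaE_anti hFF' ω))

lemma eHatBasic_subset_of_mem_omegaE (hF : F.Finite) {ω ω' : EdgeEnd G}
    (h : ω ∈ OmegaE G F ω') : EHatBasic G F ω ⊆ EHatBasic G F ω' := by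
  obtain ⟨r, s, hr, hs, hrs⟩ := h
  have hs_rep : ∀ {r' : Ray G}, r'.edgeEnd = ω → SameComp G F s r' := fun hr' =>
    Ray.edgeEquiv_of_edgeEnd_eq (hs.trans hr'.symm) F hF
  refine Set.union_subset_union (Set.image_mono ?_) (Set.image_mono ?_)
  · rintro v ⟨r', hr', hv⟩
    exact ⟨r, hr, (TailsRel.trans hrs (hs_rep hr')).trans_eventually hv⟩
  · rintro η ⟨r', s', hr', hs', hr's'⟩
    exact ⟨r, s', hr, hs', (TailsRel.trans hrs (hs_rep hr')).trans hr's'⟩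

lemma exists_eHatBasic_subset_of_isOpen {U : Set (V ⊕ EdgeEnd G)}
    (hU : IsOpen[eHatTopology G] U) {ω : EdgeEnd G} (hω : Sum.inr ω ∈ U) :
    ∃ F : Set (Sym2 V), F.Finite ∧ EHatBasic G F ω ⊆ U := by
  induction hU with
  | basic U hU =>
    obtain ⟨v, rfl⟩ | ⟨F, ω', hF, -, rfl⟩ := hU
    · simp at hω
    · have hωω' : ω ∈ OmegaE G F ω' := by simpa [EHatBasic] using hω
      exact ⟨F, hF, eHatBasic_subset_of_mem_omegaE hF hωω'⟩
  | univ => exact ⟨∅, Set.finite_empty, Set.subset_univ _⟩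
  | inter U₁ U₂ _ _ ih₁ ih₂ =>
    obtain ⟨F₁, hF₁, hF₁U⟩ := ih₁ hω.1
    obtain ⟨F₂, hF₂, hF₂U⟩ := ih₂ hω.2
    exact ⟨F₁ ∪ F₂, hF₁.union hF₂,
      Set.subset_inter ((eHatBasic_anti Set.subset_union_left ω).trans hF₁U)
        ((eHatBasic_anti Set.subset_union_right ω).trans hF₂U)⟩
  | sUnion 𝒰 _ ih =>
    obtain ⟨U, hU𝒰, hωU⟩ := hω
    obtain ⟨F, hF, hFU⟩ := ih U hU𝒰 hωU
    exact ⟨F, hF, hFU.trans (Set.subset_sUnion_of_mem hU𝒰)⟩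

end EdgeEndTopology

section LineGraph

variable {G} {F : Set (Sym2 V)}

lemma reachable_deleteEdges_of_mem_of_notMem {e : Sym2 V} (he : e ∈ G.edgeSet) (heF : e ∉ F)
    {u w : V} (hu : u ∈ e) (hw : w ∈ e) : (G.deleteEdges F).Reachable u w := by
  by_cases huw : u = w
  · exact huw ▸ SimpleGraph.Reachable.refl u
  · obtain rfl := (Sym2.mem_and_mem_iff huw).mp ⟨hu, hw⟩
    exact (SimpleGraph.deleteEdges_adj.mpr ⟨G.mem_edgeSet.mp he, heF⟩).reachable

lemma reachable_deleteEdges_of_reachAvoid_lineGraph {a b : G.edgeSet}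
    (hab : ReachAvoid G.lineGraph (Subtype.val ⁻¹' F) a b) {u w : V} (hu : u ∈ (a : Sym2 V))
    (hw : w ∈ (b : Sym2 V)) : (G.deleteEdges F).Reachable u w := by
  obtain ⟨p, hp⟩ := hab
  induction p generalizing u with
  | @nil c => exact reachable_deleteEdges_of_mem_of_notMem c.2 (hp c (by simp)) hu hw
  | @cons a c b hac p ih =>
    obtain ⟨-, x, hxa, hxc⟩ := SimpleGraph.lineGraph_adj_iff_exists.mp hac
    exact (reachable_deleteEdges_of_mem_of_notMem a.2 (hp a (by simp)) hu hxa).trans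
      (ih hxc hw fun y hy => hp y (by simp [hy]))

lemma sameComp_of_vSameComp_phiRay {r s : Ray G}
    (h : VSameComp G.lineGraph (Subtype.val ⁻¹' F) (phiRay r) (phiRay s)) :
    SameComp G F r s := by
  obtain ⟨N, hN⟩ := h
  exact ⟨N, fun m n hm hn => reachable_deleteEdges_of_reachAvoid_lineGraph (hN m n hm hn)
    (Sym2.mem_mk_left _ _) (Sym2.mem_mk_left _ _)⟩

lemma mem_omegaE_of_mem_omegaV (hF : F.Finite) {r s : Ray G}
    (h : (phiRay s).vEnd ∈ OmegaV G.lineGraph (Subtype.val ⁻¹' F) (phiRay r).vEnd) :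
    s.edgeEnd ∈ OmegaE G F r.edgeEnd := by
  obtain ⟨ρ, σ, hρ, hσ, hρσ⟩ := h
  have hrρ := Ray.vEquiv_of_vEnd_eq hρ.symm _ hF.preimage_val
  have hσs := Ray.vEquiv_of_vEnd_eq hσ _ hF.preimage_val
  exact ⟨r, s, rfl, rfl,
    sameComp_of_vSameComp_phiRay (TailsRel.trans hrρ (TailsRel.trans hρσ hσs))⟩

lemma mem_cE_of_mem_cV (hF : F.Finite) {r : Ray G} {e : G.edgeSet}
    (he : e ∈ CV G.lineGraph (Subtype.val ⁻¹' F) (phiRay r).vEnd) {v : V}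
    (hv : v ∈ (e : Sym2 V)) : v ∈ CE G F r.edgeEnd := by
  obtain ⟨ρ, hρ, hρe⟩ := he
  obtain ⟨N, hN⟩ :=
    TailsRel.trans_eventually (Ray.vEquiv_of_vEnd_eq hρ.symm _ hF.preimage_val) hρe
  exact ⟨r, rfl, N, fun n hn =>
    reachable_deleteEdges_of_reachAvoid_lineGraph (hN n hn) (Sym2.mem_mk_left _ _) hv⟩

end LineGraph

section VHatTopology

variable {H : SimpleGraph V}

lemma isOpen_vHatBasic {S : Set V} (hS : S.Finite) (ω : VEnd H) :
    IsOpen[vHatTopology H] (VHatBasic H S ω) :=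
  .basic _ (.inr ⟨S, ω, hS, rfl⟩)

lemma isOpen_singleton_inl (v : V) : IsOpen[vHatTopology H] {Sum.inl v} :=
  .basic _ (.inl ⟨{v}, Set.finite_singleton v, Set.image_singleton.symm⟩)

lemma inr_mem_vHatBasic_self {S : Set V} (hS : S.Finite) (ρ : Ray H) :
    Sum.inr ρ.vEnd ∈ VHatBasic H S ρ.vEnd :=
  .inr ⟨_, ⟨ρ, ρ, rfl, rfl, vSameComp_self hS ρ⟩, rfl⟩

end VHatTopology

/-- If `T ⊆ Ê(G)` is a discrete subspace, then
`T' = Φ(T ∩ Ω_E(G)) ∪ ⋃_{v ∈ T ∩ V(G)} K_v` is a discrete subspace of `V̂(G')`. -/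
theorem lineImage_discrete (T : Set (V ⊕ EdgeEnd G))
    (hT : ∀ t ∈ T, ∃ U : Set (V ⊕ EdgeEnd G), @IsOpen _ (eHatTopology G) U ∧ U ∩ T = {t})
    (Φ : EdgeEnd G → VEnd G.lineGraph)
    (hΦ : ∀ r : Ray G, Φ r.edgeEnd = (phiRay r).vEnd) :
    ∀ t' ∈ lineImage G Φ T,
      ∃ U : Set (↥G.edgeSet ⊕ VEnd G.lineGraph),
        @IsOpen _ (vHatTopology G.lineGraph) U ∧ U ∩ lineImage G Φ T = {t'} := by
  rintro t' (⟨ω, hωT, rfl⟩ | ⟨v, e, hvT, hve, rfl⟩)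
  · obtain ⟨U, hU, hUT⟩ := hT _ hωT
    have eq_of_mem_U_of_mem_T : ∀ x, x ∈ U → x ∈ T → x = Sum.inr ω := fun x hxU hxT =>
      (hUT.subset ⟨hxU, hxT⟩ : x ∈ {Sum.inr ω})
    obtain ⟨F, hF, hFU⟩ :=
      exists_eHatBasic_subset_of_isOpen hU (hUT.superset rfl : Sum.inr ω ∈ U ∩ T).1
    obtain ⟨r, rfl⟩ := ω.exists_rep
    rw [hΦ]
    refine ⟨VHatBasic G.lineGraph (Subtype.val ⁻¹' F) (phiRay r).vEnd,
      isOpen_vHatBasic hF.preimage_val _, Set.eq_singleton_iff_unique_mem.mpr ⟨?_, ?_⟩⟩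
    · exact ⟨inr_mem_vHatBasic_self hF.preimage_val _, .inl ⟨_, hωT, by rw [hΦ]⟩⟩
    rintro x ⟨hxW, ⟨η, hηT, rfl⟩ | ⟨v, e, hvT, hve, rfl⟩⟩
    · obtain ⟨s, rfl⟩ := η.exists_rep
      have hs : (phiRay s).vEnd ∈ OmegaV G.lineGraph (Subtype.val ⁻¹' F) (phiRay r).vEnd := by
        simpa [VHatBasic, hΦ] using hxW
      have hsr := eq_of_mem_U_of_mem_T _
        (hFU (.inr ⟨_, mem_omegaE_of_mem_omegaV hF hs, rfl⟩)) hηT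
      rw [← hΦ, Sum.inr_injective hsr]
    · have he : e ∈ CV G.lineGraph (Subtype.val ⁻¹' F) (phiRay r).vEnd := by
        simpa [VHatBasic] using hxW
      cases eq_of_mem_U_of_mem_T _ (hFU (.inl ⟨v, mem_cE_of_mem_cV hF he hve, rfl⟩)) hvT
  · refine ⟨{Sum.inl e}, isOpen_singleton_inl e, Set.eq_singleton_iff_unique_mem.mpr ?_⟩
    exact ⟨⟨rfl, .inr ⟨v, e, hvT, hve, rfl⟩⟩, fun _ hx => hx.1⟩

end EdgeEndPaper
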